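/- Let k be a field, V a k-vector space, and f: V → V a nilpotent k-linear endomorphism. For n ∈ ℤ let M_n(V,f) = Σ_{i,j ∈ ℕ, j−i=n} (range(f^i) ∩ ker(f^{j+1})), and for n ≥ 0 let Gr_n^M = M_n/M_{n−1} and let P_n(V,f) ⊆ Gr_n^M be the kernel of the map Gr_n^M → Gr_{−n−2}^M induced by f^{n+1}. On the cokernel V/f(V), define J_n = image of ker(f^{n+1}) for n ≥ 0 and J_n = 0 for n < 0. Then for every n ≥ 0: the natural map M_n(V,f) → J_n/J_{n−1} is surjective and factors through a surjection Gr_n^M → J_n/J_{n−1} whose kernel is exactly the image of Gr_{n+2}^M under the map induced by f; consequently this surjection restricts to an isomorphism P_n(V,f) ≅ J_n/J_{n−1}. -/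

import Mathlib

/-!
The whole argument rests on one property of the monodromy filtration `M`: for `a : ℕ`,
`f ^ a` maps `M (a - 1)` onto `M (-a - 1)` and `ker (f ^ a) ⊆ M (a - 1)`, hence
`(f ^ a) w ∈ M (-a - 1)` forces `w ∈ M (a - 1)`.

Modulo `range f` the filtration `M (n - 1)` reduces to `ker (f ^ n)`, so the kernel of
`M n → J n / J (n - 1)` is `M n ∩ (ker (f ^ n) + range f)`. An element `f w ∈ M n` has
`(f ^ (n + 3)) w ∈ M (-n - 4)`, so `w ∈ M (n + 2)`; this identifies the kernel with
`f (M (n + 2)) + M (n - 1)`. If `x = f w + z` there is moreover primitive, then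
`(f ^ (n + 2)) w ∈ M (-n - 3)`, so `w ∈ M (n + 1)` and `x ∈ M (n - 1)`: the restriction to
`P n` is injective. It is surjective because `ker (f ^ (n + 1)) ⊆ M n` consists of primitive
elements.
-/

/-- The explicit (Beilinson-style) formula for the monodromy weight filtration of a nilpotent
endomorphism `f`: `M n = Σ_{i,j ∈ ℕ, j - i = n} (range (f^i) ⊓ ker (f^(j+1)))`. -/
noncomputable def monodromyFiltration {k V : Type*} [Field k] [AddCommGroup V] [Module k V]
    (f : V →ₗ[k] V) (n : ℤ) : Submodule k V :=
  ⨆ (i : ℕ) (j : ℕ) (_ : (j : ℤ) - (i : ℤ) = n),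
    (LinearMap.range (f ^ i) ⊓ LinearMap.ker (f ^ (j + 1)))

/-- The filtration `J` on the cokernel `V/f(V)`: for `n ≥ 0`, `J n` is the image of
`ker (f^(n+1))`, and `J n = 0` for `n < 0`. -/
noncomputable def cokerFiltration {k V : Type*} [Field k] [AddCommGroup V] [Module k V]
    (f : V →ₗ[k] V) (n : ℤ) : Submodule k (V ⧸ LinearMap.range f) :=
  if n < 0 then ⊥
  else Submodule.map (LinearMap.range f).mkQ (LinearMap.ker (f ^ (n.toNat + 1)))

open LinearMap Submodule

section

variable {k V : Type*} [Field k] [AddCommGroup V] [Module k V] (f : V →ₗ[k] V)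

lemma ker_pow_monotone : Monotone fun m : ℕ => ker (f ^ m) := by
  intro a b hab
  obtain ⟨c, rfl⟩ := Nat.exists_eq_add_of_le hab
  dsimp only
  rw [add_comm, pow_add, Module.End.mul_eq_comp]
  exact ker_le_ker_comp _ _

lemma range_pow_antitone : Antitone fun m : ℕ => range (f ^ m) := by
  intro a b hab
  obtain ⟨c, rfl⟩ := Nat.exists_eq_add_of_le hab
  dsimp only
  rw [pow_add, Module.End.mul_eq_comp]
  exact range_comp_le_range _ _

lemma range_pow_le_range {i : ℕ} (hi : 1 ≤ i) : range (f ^ i) ≤ range f := by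
  simpa using range_pow_antitone f hi

lemma range_inf_ker_le_monodromyFiltration {n : ℤ} (i j : ℕ) (h : (j : ℤ) - i = n) :
    range (f ^ i) ⊓ ker (f ^ (j + 1)) ≤ monodromyFiltration f n :=
  le_iSup_of_le i (le_iSup_of_le j (le_iSup_of_le h le_rfl))

lemma monodromyFiltration_le {n : ℤ} {T : Submodule k V}
    (hT : ∀ i j : ℕ, (j : ℤ) - i = n → range (f ^ i) ⊓ ker (f ^ (j + 1)) ≤ T) :
    monodromyFiltration f n ≤ T :=
  iSup_le fun i => iSup_le fun j => iSup_le fun h => hT i j h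

lemma monodromyFiltration_mono : Monotone (monodromyFiltration f) := by
  intro m n hmn
  refine monodromyFiltration_le f fun i j hij => ?_
  refine (inf_le_inf_left _ (ker_pow_monotone f ?_)).trans
    (range_inf_ker_le_monodromyFiltration f i (j + (n - m).toNat) (by omega))
  simp

lemma map_pow_monodromyFiltration_le (a : ℕ) (n : ℤ) :
    map (f ^ a) (monodromyFiltration f n) ≤ monodromyFiltration f (n - 2 * a) := by
  rw [map_le_iff_le_comap]
  refine monodromyFiltration_le f fun i j hij => ?_
  rintro _ ⟨⟨u, rfl⟩, hu⟩
  rw [SetLike.mem_coe, mem_ker] at hu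
  rw [mem_comap, ← Module.End.mul_apply, ← pow_add]
  by_cases haj : a ≤ j
  · refine range_inf_ker_le_monodromyFiltration f (a + i) (j - a) (by omega)
      ⟨mem_range_self _ u, ?_⟩
    rw [SetLike.mem_coe, mem_ker, ← Module.End.mul_apply, ← pow_add,
      show j - a + 1 + (a + i) = j + 1 + i by omega, pow_add, Module.End.mul_apply, hu]
  · rw [show a + i = (a - (j + 1)) + (j + 1) + i by omega, pow_add, pow_add,
      Module.End.mul_apply, Module.End.mul_apply, hu, map_zero]
    exact zero_mem _

lemma monodromyFiltration_le_map_pow (a : ℕ) {c : ℤ} (hc : c ≤ -a) :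
    monodromyFiltration f c ≤ map (f ^ a) (monodromyFiltration f (c + 2 * a)) := by
  refine monodromyFiltration_le f fun i j hij => ?_
  rintro _ ⟨⟨u, rfl⟩, hu⟩
  rw [SetLike.mem_coe, mem_ker] at hu
  refine ⟨(f ^ (i - a)) u, range_inf_ker_le_monodromyFiltration f (i - a) (j + a) (by omega)
    ⟨mem_range_self _ u, ?_⟩, ?_⟩
  · rw [SetLike.mem_coe, mem_ker, ← Module.End.mul_apply, ← pow_add,
      show j + a + 1 + (i - a) = j + 1 + i by omega, pow_add, Module.End.mul_apply, hu]
  · rw [← Module.End.mul_apply, ← pow_add, show a + (i - a) = i by omega]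

lemma ker_pow_succ_le_monodromyFiltration (m : ℕ) :
    ker (f ^ (m + 1)) ≤ monodromyFiltration f m := by
  refine le_trans (le_inf ?_ le_rfl) (range_inf_ker_le_monodromyFiltration f 0 m (by omega))
  rw [pow_zero, Module.End.one_eq_id, range_id]
  exact le_top

lemma ker_pow_le_monodromyFiltration (m : ℕ) :
    ker (f ^ m) ≤ monodromyFiltration f (m - 1) := by
  cases m with
  | zero => simp [Module.End.one_eq_id]
  | succ m => simpa using ker_pow_succ_le_monodromyFiltration f m

lemma mem_monodromyFiltration_of_pow_apply_mem {a : ℕ} {w : V}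
    (h : (f ^ a) w ∈ monodromyFiltration f (-a - 1)) : w ∈ monodromyFiltration f (a - 1) := by
  obtain ⟨y, hy, hfy⟩ := monodromyFiltration_le_map_pow f a (by omega) h
  rw [show -(a : ℤ) - 1 + 2 * a = a - 1 by ring] at hy
  have hwy : w - y ∈ ker (f ^ a) := by rw [mem_ker, map_sub, hfy, sub_self]
  simpa using add_mem (ker_pow_le_monodromyFiltration f a hwy) hy

lemma monodromyFiltration_inf_range_le (n : ℕ) :
    monodromyFiltration f n ⊓ range f ≤ map f (monodromyFiltration f (n + 2)) := by
  rintro _ ⟨hw, w, rfl⟩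
  refine ⟨w, ?_, rfl⟩
  have hpow : (f ^ (n + 3)) w = (f ^ (n + 2)) (f w) := by
    rw [pow_succ, Module.End.mul_apply]
  have h := map_pow_monodromyFiltration_le f (n + 2) n (mem_map_of_mem (SetLike.mem_coe.2 hw))
  rw [← hpow] at h
  have hw' := mem_monodromyFiltration_of_pow_apply_mem f (a := n + 3)
    (monodromyFiltration_mono f (by push_cast; omega) h)
  rwa [show ((n + 3 : ℕ) : ℤ) - 1 = n + 2 by push_cast; ring] at hw'

lemma monodromyFiltration_le_range {c : ℤ} (hc : c < 0) : monodromyFiltration f c ≤ range f :=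
  monodromyFiltration_le f fun i j hij => inf_le_left.trans (range_pow_le_range f (by omega))

lemma monodromyFiltration_sub_one_le (n : ℕ) :
    monodromyFiltration f (n - 1) ≤ ker (f ^ n) ⊔ range f := by
  refine monodromyFiltration_le f fun i j hij => ?_
  rcases Nat.eq_zero_or_pos i with rfl | hi
  · rw [show n = j + 1 by omega]
    exact inf_le_right.trans le_sup_left
  · exact inf_le_left.trans ((range_pow_le_range f hi).trans le_sup_right)

lemma cokerFiltration_natCast (n : ℕ) :
    cokerFiltration f n = map (range f).mkQ (ker (f ^ (n + 1))) := by
  simp [cokerFiltration]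

lemma comap_mkQ_cokerFiltration_sub_one (n : ℕ) :
    comap (range f).mkQ (cokerFiltration f (n - 1)) = ker (f ^ n) ⊔ range f := by
  cases n with
  | zero => simp [cokerFiltration, Module.End.one_eq_id]
  | succ m =>
    rw [show ((m + 1 : ℕ) : ℤ) - 1 = m by omega, cokerFiltration_natCast, comap_map_mkQ,
      sup_comm]

lemma map_mkQ_monodromyFiltration_le (z : ℤ) :
    map (range f).mkQ (monodromyFiltration f z) ≤ cokerFiltration f z := by
  rw [map_le_iff_le_comap]
  rcases lt_or_ge z 0 with hz | hz
  · rw [cokerFiltration, if_pos hz, comap_bot, ker_mkQ]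
    exact monodromyFiltration_le_range f hz
  · lift z to ℕ using hz
    have hz : ((z + 1 : ℕ) : ℤ) - 1 = z := by push_cast; ring
    have hJ := comap_mkQ_cokerFiltration_sub_one f (z + 1)
    rw [hz] at hJ
    rw [hJ, ← hz]
    exact monodromyFiltration_sub_one_le f (z + 1)

lemma monodromyFiltration_inf_comap_cokerFiltration (n : ℕ) :
    monodromyFiltration f n ⊓ comap (range f).mkQ (cokerFiltration f (n - 1))
      = map f (monodromyFiltration f (n + 2)) ⊔ monodromyFiltration f (n - 1) := by
  rw [comap_mkQ_cokerFiltration_sub_one]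
  apply le_antisymm
  · rintro x ⟨hx, hxk⟩
    obtain ⟨y, hy, r, hr, rfl⟩ := mem_sup.1 hxk
    have hyM := ker_pow_le_monodromyFiltration f n hy
    have hrM : r ∈ monodromyFiltration f n := by
      simpa using sub_mem hx (monodromyFiltration_mono f (by omega) hyM)
    rw [add_comm y r]
    exact add_mem_sup (monodromyFiltration_inf_range_le f n ⟨hrM, hr⟩) hyM
  · refine sup_le (le_inf ?_ ?_) (le_inf (monodromyFiltration_mono f (by omega)) ?_)
    · simpa using map_pow_monodromyFiltration_le f 1 (n + 2)
    · exact (map_le_range).trans le_sup_right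
    · exact monodromyFiltration_sub_one_le f n

lemma mem_monodromyFiltration_sub_one_of_pow_succ_apply_mem (n : ℕ) {x : V}
    (hx : x ∈ monodromyFiltration f n)
    (hxJ : x ∈ comap (range f).mkQ (cokerFiltration f (n - 1)))
    (hprim : (f ^ (n + 1)) x ∈ monodromyFiltration f (-n - 3)) :
    x ∈ monodromyFiltration f (n - 1) := by
  obtain ⟨_, ⟨w, hw, rfl⟩, z, hz, rfl⟩ :=
    mem_sup.1 ((monodromyFiltration_inf_comap_cokerFiltration f n).le ⟨hx, hxJ⟩)
  have hfz : (f ^ (n + 1)) z ∈ monodromyFiltration f (-n - 3) := by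
    have h := map_pow_monodromyFiltration_le f (n + 1) (n - 1) (mem_map_of_mem hz)
    rwa [show (n : ℤ) - 1 - 2 * ((n + 1 : ℕ) : ℤ) = -n - 3 by push_cast; ring] at h
  have hfw : (f ^ (n + 2)) w ∈ monodromyFiltration f (-((n + 2 : ℕ) : ℤ) - 1) := by
    have h := sub_mem hprim hfz
    rwa [map_add, add_sub_cancel_right, ← Module.End.mul_apply, ← pow_succ,
      show -(n : ℤ) - 3 = -((n + 2 : ℕ) : ℤ) - 1 by push_cast; ring] at h
  have hw' := mem_monodromyFiltration_of_pow_apply_mem f hfw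
  have hfw' := map_pow_monodromyFiltration_le f 1 _ (mem_map_of_mem hw')
  rw [pow_one, show ((n + 2 : ℕ) : ℤ) - 1 - 2 * ((1 : ℕ) : ℤ) = n - 1 by push_cast; ring] at hfw'
  exact add_mem hfw' hz

end

theorem primitivePart_iso_jantzen_graded_general
    {k V : Type*} [Field k] [AddCommGroup V] [Module k V]
    (f : V →ₗ[k] V) (n : ℕ) :
    -- the natural map `M n → J n / J (n-1)` is well defined and surjective:
    (Submodule.map (LinearMap.range f).mkQ (monodromyFiltration f n)
        ≤ cokerFiltration f n
      ∧ cokerFiltration f n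
        ≤ Submodule.map (LinearMap.range f).mkQ (monodromyFiltration f n)
            ⊔ cokerFiltration f ((n : ℤ) - 1))
    -- it factors through `Gr_n^M` (i.e. `M (n-1)` is sent into `J (n-1)`):
    ∧ Submodule.map (LinearMap.range f).mkQ (monodromyFiltration f ((n : ℤ) - 1))
        ≤ cokerFiltration f ((n : ℤ) - 1)
    -- the kernel of `Gr_n^M → J n / J (n-1)` is exactly the image of `Gr_{n+2}^M` under
    -- the map induced by `f`:
    ∧ monodromyFiltration f n
        ⊓ Submodule.comap (LinearMap.range f).mkQ (cokerFiltration f ((n : ℤ) - 1))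
      = Submodule.map f (monodromyFiltration f ((n : ℤ) + 2))
          ⊔ monodromyFiltration f ((n : ℤ) - 1)
    -- the induced surjection restricts to an isomorphism `P_n ≅ J n / J (n-1)`:
    ∧ ∀ (g : (↥(monodromyFiltration f n) ⧸
            Submodule.comap (monodromyFiltration f (n : ℤ)).subtype
              (monodromyFiltration f ((n : ℤ) - 1))) →ₗ[k]
          (↥(monodromyFiltration f (-(n : ℤ) - 2)) ⧸
            Submodule.comap (monodromyFiltration f (-(n : ℤ) - 2)).subtype
              (monodromyFiltration f (-(n : ℤ) - 3)))),
        -- `g` is the map `Gr_n^M → Gr_{-n-2}^M` induced by `f^(n+1)`: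
        (∀ (x : V) (hx : x ∈ monodromyFiltration f (n : ℤ))
            (hfx : (f ^ (n + 1)) x ∈ monodromyFiltration f (-(n : ℤ) - 2)),
          g (Submodule.Quotient.mk ⟨x, hx⟩)
            = Submodule.Quotient.mk ⟨(f ^ (n + 1)) x, hfx⟩) →
      ∀ (q : (↥(monodromyFiltration f n) ⧸
            Submodule.comap (monodromyFiltration f (n : ℤ)).subtype
              (monodromyFiltration f ((n : ℤ) - 1))) →ₗ[k]
          (↥(cokerFiltration f n) ⧸
            Submodule.comap (cokerFiltration f (n : ℤ)).subtype
              (cokerFiltration f ((n : ℤ) - 1)))),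
        -- `q` is the map `Gr_n^M → J n / J (n-1)` induced by the projection `V → V/f(V)`:
        (∀ (x : V) (hx : x ∈ monodromyFiltration f (n : ℤ))
            (hpx : (LinearMap.range f).mkQ x ∈ cokerFiltration f (n : ℤ)),
          q (Submodule.Quotient.mk ⟨x, hx⟩)
            = Submodule.Quotient.mk ⟨(LinearMap.range f).mkQ x, hpx⟩) →
        Function.Bijective (q.comp (LinearMap.ker g).subtype) := by
  refine ⟨⟨map_mkQ_monodromyFiltration_le f n, ?_⟩, map_mkQ_monodromyFiltration_le f _,
    monodromyFiltration_inf_comap_cokerFiltration f n, ?_⟩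
  · rw [cokerFiltration_natCast]
    exact (map_mono (ker_pow_succ_le_monodromyFiltration f n)).trans le_sup_left
  intro g hg q hq
  have hfM : ∀ x ∈ monodromyFiltration f n,
      (f ^ (n + 1)) x ∈ monodromyFiltration f (-n - 2) := fun x hx => by
    have h := map_pow_monodromyFiltration_le f (n + 1) n (mem_map_of_mem hx)
    rwa [show (n : ℤ) - 2 * ((n + 1 : ℕ) : ℤ) = -n - 2 by push_cast; ring] at h
  have hpM : ∀ x ∈ monodromyFiltration f n, (range f).mkQ x ∈ cokerFiltration f n :=
    fun x hx => map_mkQ_monodromyFiltration_le f n (mem_map_of_mem hx)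
  constructor
  · rw [injective_iff_map_eq_zero]
    rintro ⟨ξ, hξ⟩ hqξ
    obtain ⟨⟨x, hx⟩, rfl⟩ := Submodule.Quotient.mk_surjective _ ξ
    rw [mem_ker, hg x hx (hfM x hx), Submodule.Quotient.mk_eq_zero] at hξ
    rw [comp_apply, subtype_apply, hq x hx (hpM x hx), Submodule.Quotient.mk_eq_zero] at hqξ
    exact Subtype.ext <| (Submodule.Quotient.mk_eq_zero _).2 <|
      mem_monodromyFiltration_sub_one_of_pow_succ_apply_mem f n hx hqξ hξ
  · intro η
    obtain ⟨⟨_, ht⟩, rfl⟩ := Submodule.Quotient.mk_surjective _ η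
    obtain ⟨x, hx0, rfl⟩ := (cokerFiltration_natCast f n ▸ ht :)
    have hx := ker_pow_succ_le_monodromyFiltration f n hx0
    refine ⟨⟨Submodule.Quotient.mk ⟨x, hx⟩, ?_⟩, hq x hx (hpM x hx)⟩
    rw [mem_ker, hg x hx (hfM x hx), Submodule.Quotient.mk_eq_zero, mem_comap, subtype_apply]
    simp [mem_ker.1 hx0]

/-- Let `f` be a nilpotent endomorphism of a vector space `V`, `M` its
monodromy weight filtration, `Gr_n^M = M n / M (n-1)`, `P_n ⊆ Gr_n^M` the kernel of the map
`Gr_n^M → Gr_{-n-2}^M` induced by `f^(n+1)`, and `J` the filtration on `V/f(V)` by images of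
the kernels of powers of `f`.  Then for every `n ≥ 0`: the natural map
`M n → J n / J (n-1)` is surjective, it factors through a surjection
`Gr_n^M → J n / J (n-1)` whose kernel is exactly the image of `Gr_{n+2}^M` under the map
induced by `f`; consequently this surjection restricts to an isomorphism
`P_n ≅ J n / J (n-1)`. -/
theorem primitivePart_iso_jantzen_graded
    {k V : Type*} [Field k] [AddCommGroup V] [Module k V]
    (f : V →ₗ[k] V) (hf : IsNilpotent f) (n : ℕ) :
    -- the natural map `M n → J n / J (n-1)` is well defined and surjective:
    (Submodule.map (LinearMap.range f).mkQ (monodromyFiltration f n)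
        ≤ cokerFiltration f n
      ∧ cokerFiltration f n
        ≤ Submodule.map (LinearMap.range f).mkQ (monodromyFiltration f n)
            ⊔ cokerFiltration f ((n : ℤ) - 1))
    -- it factors through `Gr_n^M` (i.e. `M (n-1)` is sent into `J (n-1)`):
    ∧ Submodule.map (LinearMap.range f).mkQ (monodromyFiltration f ((n : ℤ) - 1))
        ≤ cokerFiltration f ((n : ℤ) - 1)
    -- the kernel of `Gr_n^M → J n / J (n-1)` is exactly the image of `Gr_{n+2}^M` under
    -- the map induced by `f`:
    ∧ monodromyFiltration f n
        ⊓ Submodule.comap (LinearMap.range f).mkQ (cokerFiltration f ((n : ℤ) - 1))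
      = Submodule.map f (monodromyFiltration f ((n : ℤ) + 2))
          ⊔ monodromyFiltration f ((n : ℤ) - 1)
    -- the induced surjection restricts to an isomorphism `P_n ≅ J n / J (n-1)`:
    ∧ ∀ (g : (↥(monodromyFiltration f n) ⧸
            Submodule.comap (monodromyFiltration f (n : ℤ)).subtype
              (monodromyFiltration f ((n : ℤ) - 1))) →ₗ[k]
          (↥(monodromyFiltration f (-(n : ℤ) - 2)) ⧸
            Submodule.comap (monodromyFiltration f (-(n : ℤ) - 2)).subtype
              (monodromyFiltration f (-(n : ℤ) - 3)))),
        -- `g` is the map `Gr_n^M → Gr_{-n-2}^M` induced by `f^(n+1)`: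
        (∀ (x : V) (hx : x ∈ monodromyFiltration f (n : ℤ))
            (hfx : (f ^ (n + 1)) x ∈ monodromyFiltration f (-(n : ℤ) - 2)),
          g (Submodule.Quotient.mk ⟨x, hx⟩)
            = Submodule.Quotient.mk ⟨(f ^ (n + 1)) x, hfx⟩) →
      ∀ (q : (↥(monodromyFiltration f n) ⧸
            Submodule.comap (monodromyFiltration f (n : ℤ)).subtype
              (monodromyFiltration f ((n : ℤ) - 1))) →ₗ[k]
          (↥(cokerFiltration f n) ⧸
            Submodule.comap (cokerFiltration f (n : ℤ)).subtype
              (cokerFiltration f ((n : ℤ) - 1)))),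
        -- `q` is the map `Gr_n^M → J n / J (n-1)` induced by the projection `V → V/f(V)`:
        (∀ (x : V) (hx : x ∈ monodromyFiltration f (n : ℤ))
            (hpx : (LinearMap.range f).mkQ x ∈ cokerFiltration f (n : ℤ)),
          q (Submodule.Quotient.mk ⟨x, hx⟩)
            = Submodule.Quotient.mk ⟨(LinearMap.range f).mkQ x, hpx⟩) →
        Function.Bijective (q.comp (LinearMap.ker g).subtype) :=
  primitivePart_iso_jantzen_graded_general f n
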